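/- arXiv:1902.11244 — 4 statements merged into one kernel-verified Lean document; each statement's English description precedes it below -/
import Mathlib

section
/- If L is the Laplacian matrix of a connected simple undirected graph on N nodes and Q is a positive semi-definite N×N real matrix such that for every initial state x0 and every gain g>0 the integral ∫₀^∞ x(t)ᵀQx(t) dt is finite, where x(t) = e^{-gLt}x0, then there exists a positive semi-definite matrix W such that Q = LWL. -/
/-! Since `L 1 = 0`, the trajectory starting at the consensus state `1` is constant, so its cost
is finite only if `1ᵀ Q 1 = 0`, i.e. `Q 1 = 0`. Then `M = L + 1 1ᵀ` is invertible, commutes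
with `L` and satisfies `M Q M = L Q L`, whence `Q = M⁻¹ L Q L M⁻¹ = L (M⁻¹ Q M⁻¹) L`. -/

open Matrix MeasureTheory Set

section
attribute [local instance] Matrix.linftyOpNormedRing Matrix.linftyOpNormedAlgebra

theorem Matrix.exp_mulVec_eq_self_of_mulVec_eq_zero {𝕜 n : Type*} [RCLike 𝕜] [Fintype n]
    [DecidableEq n] {A : Matrix n n 𝕜} {v : n → 𝕜} (h : A *ᵥ v = 0) :
    NormedSpace.exp A *ᵥ v = v := by
  have : CompleteSpace (Matrix n n 𝕜) := FiniteDimensional.complete 𝕜 _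
  have hpow : ∀ k ≠ 0, A ^ k *ᵥ v = 0 := by
    rintro (_ | k) hk
    · contradiction
    · rw [pow_succ, ← mulVec_mulVec, h, mulVec_zero]
  have hsum := (NormedSpace.exp_series_hasSum_exp' (𝕂 := 𝕜) A).map
    (mulVec.addMonoidHomLeft v) (continuous_id.matrix_mulVec continuous_const)
  refine (hsum.unique (hasSum_single 0 fun k hk => ?_)).trans ?_
  · simp [mulVec.addMonoidHomLeft, smul_mulVec, hpow k hk]
  · simp [mulVec.addMonoidHomLeft]

end

theorem eq_zero_of_integrableOn_Ici_const {E : Type*} [NormedAddCommGroup E] {a : ℝ} {c : E}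
    (h : IntegrableOn (fun _ : ℝ => c) (Ici a)) : c = 0 := by
  simpa [integrableOn_const_iff, Real.volume_Ici] using h

theorem Matrix.PosSemidef.mulVec_eq_zero_of_integrableOn_quadratic_exp {n : Type*} [Fintype n]
    [DecidableEq n] {L Q : Matrix n n ℝ} {v : n → ℝ} {g : ℝ} (hQ : Q.PosSemidef)
    (hLv : L *ᵥ v = 0)
    (hint : IntegrableOn (fun t : ℝ => (NormedSpace.exp ((-(g * t)) • L) *ᵥ v) ⬝ᵥ
      (Q *ᵥ (NormedSpace.exp ((-(g * t)) • L) *ᵥ v))) (Ici 0)) :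
    Q *ᵥ v = 0 := by
  have hfixed (t : ℝ) : NormedSpace.exp ((-(g * t)) • L) *ᵥ v = v :=
    exp_mulVec_eq_self_of_mulVec_eq_zero (by rw [smul_mulVec, hLv, smul_zero])
  simp only [hfixed] at hint
  simpa using (hQ.dotProduct_mulVec_zero_iff v).mp (eq_zero_of_integrableOn_Ici_const hint)

theorem Matrix.posSemidef_vecMulVec_self {n : Type*} [Fintype n] (v : n → ℝ) :
    (vecMulVec v v).PosSemidef := by
  simpa using posSemidef_vecMulVec_self_star v

theorem Matrix.PosSemidef.isUnit_det_add_vecMulVec_self {n : Type*} [Fintype n] [DecidableEq n]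
    {L : Matrix n n ℝ} {v : n → ℝ} (hL : L.PosSemidef)
    (hker : LinearMap.ker L.mulVecLin = Submodule.span ℝ {v}) :
    IsUnit (L + vecMulVec v v).det := by
  rw [isUnit_iff_ne_zero, Ne, ← exists_mulVec_eq_zero_iff]
  rintro ⟨x, hx0, hx⟩
  have hquad : x ⬝ᵥ L *ᵥ x + x ⬝ᵥ vecMulVec v v *ᵥ x = 0 := by
    rw [← dotProduct_add, ← add_mulVec, hx, dotProduct_zero]
  have hLx : x ⬝ᵥ L *ᵥ x = 0 := by
    have hLnonneg : 0 ≤ x ⬝ᵥ L *ᵥ x := by simpa using hL.dotProduct_mulVec_nonneg x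
    have hVnonneg : 0 ≤ x ⬝ᵥ vecMulVec v v *ᵥ x := by
      simpa using (posSemidef_vecMulVec_self v).dotProduct_mulVec_nonneg x
    linarith
  have hvx : v ⬝ᵥ x = 0 := by
    rw [hLx, zero_add, vecMulVec_mulVec] at hquad
    simpa [dotProduct_comm x v] using hquad
  obtain ⟨c, rfl⟩ : ∃ c : ℝ, c • v = x := by
    rw [← Submodule.mem_span_singleton, ← hker, LinearMap.mem_ker, mulVecLin_apply]
    simpa using (hL.dotProduct_mulVec_zero_iff x).mp (by simpa using hLx)
  exact hx0 (dotProduct_self_eq_zero.mp (by rw [smul_dotProduct, hvx, smul_zero]))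

theorem Matrix.exists_posSemidef_eq_mul_mul_of_isUnit_det_add {n R : Type*} [Fintype n]
    [DecidableEq n] [CommRing R] [PartialOrder R] [StarRing R] {L V Q : Matrix n n R}
    (hL : L.IsHermitian) (hV : V.IsHermitian) (hQ : Q.PosSemidef) (hLV : L * V = 0)
    (hQV : Q * V = 0) (hM : IsUnit (L + V).det) :
    ∃ W : Matrix n n R, W.PosSemidef ∧ Q = L * W * L := by
  have hVL : V * L = 0 := by
    simpa [hL.eq, hV.eq] using congrArg conjTranspose hLV
  have hVQ : V * Q = 0 := by
    simpa [hQ.isHermitian.eq, hV.eq] using congrArg conjTranspose hQV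
  set M := L + V
  have hMQM : M * Q * M = L * Q * L := by
    simp only [M, add_mul, mul_add, hVQ, hQV, mul_assoc, mul_zero, add_zero]
  have hLM : M * L = L * M := by
    simp only [M, add_mul, mul_add, hVL, hLV]
  have hLMinv : M⁻¹ * L = L * M⁻¹ := by
    calc M⁻¹ * L = M⁻¹ * (L * M) * M⁻¹ := by
          rw [← mul_assoc, mul_nonsing_inv_cancel_right _ _ hM]
      _ = L * M⁻¹ := by rw [← hLM, nonsing_inv_mul_cancel_left _ _ hM]
  refine ⟨M⁻¹ * Q * M⁻¹, ?_, ?_⟩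
  · have hMinv : M⁻¹ᴴ = M⁻¹ := by rw [conjTranspose_nonsing_inv, (hL.add hV).eq]
    simpa only [hMinv] using hQ.conjTranspose_mul_mul_same M⁻¹
  · calc Q = M⁻¹ * (M * Q * M) * M⁻¹ := by
          rw [← mul_assoc, ← mul_assoc, nonsing_inv_mul _ hM, one_mul,
            mul_nonsing_inv_cancel_right _ _ hM]
      _ = M⁻¹ * (L * Q * L) * M⁻¹ := by rw [hMQM]
      _ = (M⁻¹ * L) * Q * (L * M⁻¹) := by simp only [mul_assoc]
      _ = (L * M⁻¹) * Q * (M⁻¹ * L) := by rw [hLMinv]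
      _ = L * (M⁻¹ * Q * M⁻¹) * L := by simp only [mul_assoc]

/-- If `L` is the Laplacian of a connected simple undirected graph (symmetric PSD with
kernel spanned by the all-ones vector) and `Q ⪰ 0` gives finite cost along every
closed-loop trajectory `x(t) = e^{-gLt} x0` with `g > 0`, then `Q = L W L` for some `W ⪰ 0`. -/
theorem stmt0 {N : ℕ} (L Q : Matrix (Fin N) (Fin N) ℝ)
    (hL : L.PosSemidef)
    (hker : LinearMap.ker L.mulVecLin = Submodule.span ℝ {(1 : Fin N → ℝ)})
    (hQ : Q.PosSemidef)
    (hfin : ∀ (x0 : Fin N → ℝ) (g : ℝ), 0 < g →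
      IntegrableOn
        (fun t : ℝ => (NormedSpace.exp ((-(g * t)) • L) *ᵥ x0) ⬝ᵥ
          (Q *ᵥ (NormedSpace.exp ((-(g * t)) • L) *ᵥ x0))) (Ici 0)) :
    ∃ W : Matrix (Fin N) (Fin N) ℝ, W.PosSemidef ∧ Q = L * W * L := by
  have hL1 : L *ᵥ 1 = 0 := by
    have : (1 : Fin N → ℝ) ∈ LinearMap.ker L.mulVecLin :=
      hker ▸ Submodule.mem_span_singleton_self 1
    simpa using this
  have hQ1 : Q *ᵥ 1 = 0 := hQ.mulVec_eq_zero_of_integrableOn_quadratic_exp hL1 (hfin 1 1 one_pos)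
  refine exists_posSemidef_eq_mul_mul_of_isUnit_det_add hL.isHermitian
    (posSemidef_vecMulVec_self 1).isHermitian hQ ?_ ?_
    (hL.isUnit_det_add_vecMulVec_self hker)
  · rw [mul_vecMulVec, hL1, zero_vecMulVec]
  · rw [mul_vecMulVec, hQ1, zero_vecMulVec]
end

section
/- Let L be the Laplacian of a connected simple undirected graph and W a positive semi-definite matrix. Then X0 = ∫₀^∞ e^{-τL} L W L e^{-τL} dτ exists, is positive semi-definite, satisfies the Lyapunov equation -LX - XL + LWL = 0, and satisfies span(1_N) ⊆ ker(X0). Moreover X0 is the unique positive semi-definite solution X of this Lyapunov equation with span(1_N) ⊆ ker(X). -/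
/-!
Diagonalise `L = U diag(d) Uᵀ` with `d ≥ 0` and put `Ĉ = Uᵀ (L W L) U`. Since `ker L ⊆ ker (L W L)`,
`Ĉ k l = 0` whenever `d l = 0`. In these coordinates the integrand has entries
`Ĉ k l * exp (-(d k + d l) τ)`, so it is integrable and integrates to `Ĉ k l / (d k + d l)`; this
matrix visibly solves `D X + X D = Ĉ` and kills `Uᵀ (ker L)`. Positivity is inherited from the
integrand, which is positive semidefinite for every `τ`. For uniqueness, the difference `Δ` of two
solutions satisfies `(d k + d l) Δ̂ k l = 0`, and `Δ̂ k l = 0` when `d k = d l = 0` because `Δ`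
vanishes on `ker L = span 1`.
-/

open Matrix MeasureTheory Set

section EntrywiseIntegral

variable {α l m n p : Type*} [MeasurableSpace α] {μ : Measure α} [Fintype m] [Fintype n]
  [DecidableEq m] [DecidableEq n] {F : α → Matrix m n ℝ}

theorem LinearMap.apply_eq_sum_mul_apply_single (φ : Matrix m n ℝ →ₗ[ℝ] ℝ) (M : Matrix m n ℝ) :
    φ M = ∑ i, ∑ j, M i j * φ (Matrix.single i j 1) := by
  conv_lhs => rw [matrix_eq_sum_single M]
  simp only [map_sum]
  refine Finset.sum_congr rfl fun i _ => Finset.sum_congr rfl fun j _ => ?_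
  rw [← smul_eq_mul, ← map_smul, smul_single, smul_eq_mul, mul_one]

theorem LinearMap.integrable_comp_of_integrable_apply (φ : Matrix m n ℝ →ₗ[ℝ] ℝ)
    (hF : ∀ i j, Integrable (fun x => F x i j) μ) : Integrable (fun x => φ (F x)) μ := by
  simp only [φ.apply_eq_sum_mul_apply_single (F _)]
  exact integrable_finsetSum _ fun i _ => integrable_finsetSum _ fun j _ => (hF i j).mul_const _

theorem LinearMap.integral_comp_of_integrable_apply (φ : Matrix m n ℝ →ₗ[ℝ] ℝ)
    (hF : ∀ i j, Integrable (fun x => F x i j) μ) :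
    ∫ x, φ (F x) ∂μ = φ (of fun i j => ∫ x, F x i j ∂μ) := by
  simp only [φ.apply_eq_sum_mul_apply_single (F _), φ.apply_eq_sum_mul_apply_single (of _),
    of_apply]
  rw [integral_finsetSum _ fun i _ => integrable_finsetSum _ fun j _ => (hF i j).mul_const _]
  refine Finset.sum_congr rfl fun i _ => ?_
  rw [integral_finsetSum _ fun j _ => (hF i j).mul_const _]
  simp only [integral_mul_const]

theorem Matrix.integrable_mul_mul_apply (A : Matrix l m ℝ) (B : Matrix n p ℝ)
    (hF : ∀ i j, Integrable (fun x => F x i j) μ) (i : l) (j : p) :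
    Integrable (fun x => (A * F x * B) i j) μ := by
  simpa [Matrix.mul_assoc] using
    (entryLinearMap ℝ ℝ i j ∘ₗ mulLeftLinearMap p ℝ A ∘ₗ mulRightLinearMap m ℝ B)
      |>.integrable_comp_of_integrable_apply hF

theorem Matrix.integral_mul_mul_apply (A : Matrix l m ℝ) (B : Matrix n p ℝ)
    (hF : ∀ i j, Integrable (fun x => F x i j) μ) (i : l) (j : p) :
    ∫ x, (A * F x * B) i j ∂μ = (A * of (fun k k' => ∫ x, F x k k' ∂μ) * B) i j := by
  simpa [Matrix.mul_assoc] using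
    (entryLinearMap ℝ ℝ i j ∘ₗ mulLeftLinearMap p ℝ A ∘ₗ mulRightLinearMap m ℝ B)
      |>.integral_comp_of_integrable_apply hF

end EntrywiseIntegral

theorem Matrix.replicateRow_mul_mul_replicateCol_apply {n : Type*} [Fintype n] (x : n → ℝ)
    (M : Matrix n n ℝ) : (replicateRow Unit x * M * replicateCol Unit x) () () = x ⬝ᵥ M *ᵥ x := by
  simp only [mul_apply, replicateRow_apply, replicateCol_apply, dotProduct, mulVec,
    Finset.sum_mul, Finset.mul_sum, mul_assoc]
  exact Finset.sum_comm

theorem Matrix.posSemidef_of_integral_apply {α n : Type*} [MeasurableSpace α] {μ : Measure α}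
    [Fintype n] [DecidableEq n] {F : α → Matrix n n ℝ}
    (hF : ∀ i j, Integrable (fun x => F x i j) μ) (hpos : ∀ᵐ x ∂μ, (F x).PosSemidef) :
    (of fun i j => ∫ x, F x i j ∂μ).PosSemidef := by
  refine posSemidef_iff_dotProduct_mulVec.mpr ⟨?_, fun x => ?_⟩
  · ext i j
    refine integral_congr_ae (hpos.mono fun x hx => ?_)
    simpa using hx.1.apply i j
  · rw [star_trivial, ← replicateRow_mul_mul_replicateCol_apply,
      ← integral_mul_mul_apply _ _ hF]
    refine integral_nonneg_of_ae ?_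
    filter_upwards [hpos] with τ hτ
    rw [Pi.zero_apply, replicateRow_mul_mul_replicateCol_apply]
    simpa using hτ.dotProduct_mulVec_nonneg x

theorem integrableOn_Ici_mul_exp_neg_mul {b : ℝ} (c : ℝ) (hb : 0 ≤ b) (hc : b = 0 → c = 0) :
    IntegrableOn (fun τ => c * Real.exp (-b * τ)) (Ici 0) := by
  rcases hb.eq_or_lt with rfl | hb
  · simp [hc rfl]
  · exact (Iff.mpr integrableOn_Ici_iff_integrableOn_Ioi
      (integrableOn_exp_mul_Ioi (neg_neg_of_pos hb) 0)).const_mul c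

theorem integral_Ici_mul_exp_neg_mul {b : ℝ} (c : ℝ) (hb : 0 ≤ b) (hc : b = 0 → c = 0) :
    ∫ τ in Ici 0, c * Real.exp (-b * τ) = c / b := by
  rcases hb.eq_or_lt with rfl | hb
  · simp [hc rfl]
  · rw [integral_Ici_eq_integral_Ioi, integral_const_mul, integral_exp_mul_Ioi (neg_neg_of_pos hb)]
    simp [div_eq_mul_inv]

theorem neg_sub_add_eq_zero_iff {G : Type*} [AddCommGroup G] {a b c : G} :
    -a - b + c = 0 ↔ a + b = c := by
  rw [← neg_add', neg_add_eq_zero]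

theorem Matrix.IsHermitian.real_spectral_theorem {n : Type*} [Fintype n] [DecidableEq n]
    {L : Matrix n n ℝ} (hL : L.IsHermitian) :
    L = hL.eigenvectorUnitary * diagonal hL.eigenvalues *
      star (hL.eigenvectorUnitary : Matrix n n ℝ) := by
  conv_lhs => rw [hL.spectral_theorem]
  simp [Unitary.conjStarAlgAut_apply, RCLike.ofReal_real_eq_id]

namespace Matrix

variable {n : Type*} [Fintype n] [DecidableEq n] {L U : Matrix n n ℝ} {d : n → ℝ}

theorem mul_eq_mul_diagonal_of_eq_conj (hU : U ∈ unitaryGroup n ℝ)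
    (hLd : L = U * diagonal d * star U) : L * U = U * diagonal d := by
  rw [hLd, Matrix.mul_assoc, (mem_unitaryGroup_iff'.mp hU), Matrix.mul_one]

theorem star_mul_eq_diagonal_mul_of_eq_conj (hU : U ∈ unitaryGroup n ℝ)
    (hLd : L = U * diagonal d * star U) : star U * L = diagonal d * star U := by
  rw [hLd, ← Matrix.mul_assoc, ← Matrix.mul_assoc, (mem_unitaryGroup_iff'.mp hU), Matrix.one_mul]

theorem exp_smul_of_eq_conj (hU : U ∈ unitaryGroup n ℝ) (hLd : L = U * diagonal d * star U)
    (t : ℝ) : NormedSpace.exp (t • L) = U * diagonal (fun k => Real.exp (t * d k)) * star U := by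
  have hinv : U⁻¹ = star U := inv_eq_right_inv (mem_unitaryGroup_iff.mp hU)
  have hUunit : IsUnit U := (Unitary.toUnits ⟨U, hU⟩).isUnit
  rw [hLd, ← smul_mul_assoc, ← mul_smul_comm, ← diagonal_smul, ← hinv, exp_conj _ _ hUunit,
    exp_diagonal]
  congr 3
  funext k
  simp [Real.exp_eq_exp_ℝ]

noncomputable def lyapunovIntegrand (L C : Matrix n n ℝ) (τ : ℝ) : Matrix n n ℝ :=
  NormedSpace.exp ((-τ) • L) * C * NormedSpace.exp ((-τ) • L)

theorem lyapunovIntegrand_eq (hU : U ∈ unitaryGroup n ℝ) (hLd : L = U * diagonal d * star U)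
    (C : Matrix n n ℝ) (τ : ℝ) :
    lyapunovIntegrand L C τ =
      U * of (fun k l => (star U * C * U) k l * Real.exp (-(d k + d l) * τ)) * star U := by
  have hconj : diagonal (fun k => Real.exp (-τ * d k)) * (star U * C * U) *
      diagonal (fun k => Real.exp (-τ * d k)) =
      of fun k l => (star U * C * U) k l * Real.exp (-(d k + d l) * τ) := by
    ext k l
    rw [mul_diagonal, diagonal_mul, of_apply,
      show -(d k + d l) * τ = -τ * d k + -τ * d l by ring, Real.exp_add]
    ring
  rw [lyapunovIntegrand, exp_smul_of_eq_conj hU hLd, ← hconj]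
  simp only [Matrix.mul_assoc]

theorem lyapunovIntegrand_posSemidef (hL : L.IsHermitian) {C : Matrix n n ℝ} (hC : C.PosSemidef)
    (τ : ℝ) : (lyapunovIntegrand L C τ).PosSemidef := by
  have hexp : (NormedSpace.exp ((-τ) • L))ᴴ = NormedSpace.exp ((-τ) • L) :=
    (hL.smul (IsSelfAdjoint.all (-τ))).exp
  have h := hC.mul_mul_conjTranspose_same (NormedSpace.exp ((-τ) • L))
  rwa [hexp] at h

theorem conj_apply_eq_zero_of_ker_le (hU : U ∈ unitaryGroup n ℝ)
    (hLd : L = U * diagonal d * star U) {C : Matrix n n ℝ}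
    (hC : LinearMap.ker L.mulVecLin ≤ LinearMap.ker C.mulVecLin) {k l : n} (hl : d l = 0) :
    (star U * C * U) k l = 0 := by
  have hLcol : L *ᵥ (fun i => U i l) = 0 := by
    funext i
    change (L * U) i l = 0
    rw [mul_eq_mul_diagonal_of_eq_conj hU hLd, mul_diagonal, hl, mul_zero]
  have hCcol : C *ᵥ (fun i => U i l) = 0 := hC hLcol
  change ((star U * C) *ᵥ fun i => U i l) k = 0
  rw [← mulVec_mulVec, hCcol, mulVec_zero, Pi.zero_apply]

theorem conj_apply_eq_zero_of_add_eq_zero (hU : U ∈ unitaryGroup n ℝ)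
    (hLd : L = U * diagonal d * star U) (hd : ∀ k, 0 ≤ d k) {C : Matrix n n ℝ}
    (hC : LinearMap.ker L.mulVecLin ≤ LinearMap.ker C.mulVecLin) {k l : n}
    (hkl : d k + d l = 0) : (star U * C * U) k l = 0 :=
  conj_apply_eq_zero_of_ker_le hU hLd hC (by linarith [hd k, hd l])

theorem mul_conj_add_conj_mul (hU : U ∈ unitaryGroup n ℝ) (hLd : L = U * diagonal d * star U)
    (Z : Matrix n n ℝ) :
    L * (U * Z * star U) + U * Z * star U * L =
      U * of (fun k l => (d k + d l) * Z k l) * star U := by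
  have hDZ : diagonal d * Z + Z * diagonal d = of fun k l => (d k + d l) * Z k l := by
    ext k l
    simp only [Matrix.add_apply, diagonal_mul, mul_diagonal, of_apply]
    ring
  rw [← hDZ, Matrix.mul_add, Matrix.add_mul]
  congr 1
  · simp only [← Matrix.mul_assoc, mul_eq_mul_diagonal_of_eq_conj hU hLd]
  · simp only [Matrix.mul_assoc, star_mul_eq_diagonal_mul_of_eq_conj hU hLd]

theorem conj_star_conj_of_mem_unitaryGroup (hU : U ∈ unitaryGroup n ℝ) (M : Matrix n n ℝ) :
    U * (star U * M * U) * star U = M := by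
  simp only [← Matrix.mul_assoc, mem_unitaryGroup_iff.mp hU, Matrix.one_mul]
  rw [Matrix.mul_assoc, mem_unitaryGroup_iff.mp hU, Matrix.mul_one]

theorem star_conj_conj_of_mem_unitaryGroup (hU : U ∈ unitaryGroup n ℝ) (M : Matrix n n ℝ) :
    star U * (U * M * star U) * U = M := by
  simp only [← Matrix.mul_assoc, mem_unitaryGroup_iff'.mp hU, Matrix.one_mul]
  rw [Matrix.mul_assoc, mem_unitaryGroup_iff'.mp hU, Matrix.mul_one]

/-- Where `d k + d l = 0` the entry is `0` by `x / 0 = 0`, the right value when `ker L ≤ ker C`. -/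
noncomputable def lyapunovSolution (U : Matrix n n ℝ) (d : n → ℝ) (C : Matrix n n ℝ) :
    Matrix n n ℝ :=
  U * of (fun k l => (star U * C * U) k l / (d k + d l)) * star U

variable {C : Matrix n n ℝ}

theorem integrableOn_conj_apply_mul_exp (hU : U ∈ unitaryGroup n ℝ)
    (hLd : L = U * diagonal d * star U) (hd : ∀ k, 0 ≤ d k)
    (hC : LinearMap.ker L.mulVecLin ≤ LinearMap.ker C.mulVecLin) (k l : n) :
    IntegrableOn (fun τ => (star U * C * U) k l * Real.exp (-(d k + d l) * τ)) (Ici 0) :=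
  integrableOn_Ici_mul_exp_neg_mul _ (add_nonneg (hd k) (hd l))
    (conj_apply_eq_zero_of_add_eq_zero hU hLd hd hC)

theorem integrableOn_lyapunovIntegrand (hU : U ∈ unitaryGroup n ℝ)
    (hLd : L = U * diagonal d * star U) (hd : ∀ k, 0 ≤ d k)
    (hC : LinearMap.ker L.mulVecLin ≤ LinearMap.ker C.mulVecLin) (i j : n) :
    IntegrableOn (fun τ => lyapunovIntegrand L C τ i j) (Ici 0) := by
  simp only [lyapunovIntegrand_eq hU hLd]
  exact integrable_mul_mul_apply _ _ (integrableOn_conj_apply_mul_exp hU hLd hd hC) i j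

theorem integral_lyapunovIntegrand (hU : U ∈ unitaryGroup n ℝ)
    (hLd : L = U * diagonal d * star U) (hd : ∀ k, 0 ≤ d k)
    (hC : LinearMap.ker L.mulVecLin ≤ LinearMap.ker C.mulVecLin) (i j : n) :
    ∫ τ in Ici 0, lyapunovIntegrand L C τ i j = lyapunovSolution U d C i j := by
  simp only [lyapunovIntegrand_eq hU hLd]
  have hentry : ∀ k l, ∫ τ in Ici 0, (star U * C * U) k l * Real.exp (-(d k + d l) * τ) =
      (star U * C * U) k l / (d k + d l) := fun k l =>
    integral_Ici_mul_exp_neg_mul _ (add_nonneg (hd k) (hd l))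
      (conj_apply_eq_zero_of_add_eq_zero hU hLd hd hC)
  refine (integral_mul_mul_apply U (star U)
    (integrableOn_conj_apply_mul_exp hU hLd hd hC) i j).trans ?_
  simp only [hentry, lyapunovSolution]

theorem mul_lyapunovSolution_add_lyapunovSolution_mul (hU : U ∈ unitaryGroup n ℝ)
    (hLd : L = U * diagonal d * star U) (hd : ∀ k, 0 ≤ d k)
    (hC : LinearMap.ker L.mulVecLin ≤ LinearMap.ker C.mulVecLin) :
    L * lyapunovSolution U d C + lyapunovSolution U d C * L = C := by
  have hcancel : of (fun k l => (d k + d l) * ((star U * C * U) k l / (d k + d l))) =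
      star U * C * U := by
    ext k l
    rw [of_apply]
    rcases eq_or_ne (d k + d l) 0 with h | h
    · rw [h, zero_mul, conj_apply_eq_zero_of_add_eq_zero hU hLd hd hC h]
    · exact mul_div_cancel₀ _ h
  rw [lyapunovSolution, mul_conj_add_conj_mul hU hLd]
  simp only [of_apply]
  rw [hcancel, conj_star_conj_of_mem_unitaryGroup hU]

theorem ker_le_ker_lyapunovSolution (hU : U ∈ unitaryGroup n ℝ)
    (hLd : L = U * diagonal d * star U)
    (hC : LinearMap.ker L.mulVecLin ≤ LinearMap.ker C.mulVecLin) :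
    LinearMap.ker L.mulVecLin ≤ LinearMap.ker (lyapunovSolution U d C).mulVecLin := by
  intro v (hv : L *ᵥ v = 0)
  have hdiag : diagonal d *ᵥ (star U *ᵥ v) = 0 := by
    rw [mulVec_mulVec, ← star_mul_eq_diagonal_mul_of_eq_conj hU hLd, ← mulVec_mulVec, hv,
      mulVec_zero]
  have hw : ∀ l, d l * (star U *ᵥ v) l = 0 := fun l => by
    simpa [mulVec_diagonal] using congrFun hdiag l
  have hYw : of (fun k l => (star U * C * U) k l / (d k + d l)) *ᵥ (star U *ᵥ v) = 0 := by
    funext k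
    change ∑ l, (star U * C * U) k l / (d k + d l) * (star U *ᵥ v) l = 0
    refine Finset.sum_eq_zero fun l _ => ?_
    rcases mul_eq_zero.mp (hw l) with hl | hl
    · rw [conj_apply_eq_zero_of_ker_le hU hLd hC hl, zero_div, zero_mul]
    · rw [hl, mul_zero]
  change lyapunovSolution U d C *ᵥ v = 0
  rw [lyapunovSolution, ← mulVec_mulVec, ← mulVec_mulVec, hYw, mulVec_zero]

theorem eq_zero_of_mul_add_mul_eq_zero (hU : U ∈ unitaryGroup n ℝ)
    (hLd : L = U * diagonal d * star U) (hd : ∀ k, 0 ≤ d k) {Δ : Matrix n n ℝ}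
    (hΔ : L * Δ + Δ * L = 0) (hker : LinearMap.ker L.mulVecLin ≤ LinearMap.ker Δ.mulVecLin) :
    Δ = 0 := by
  have hΔZ := (conj_star_conj_of_mem_unitaryGroup hU Δ).symm
  set Z := star U * Δ * U
  have hZ : of (fun k l => (d k + d l) * Z k l) = 0 := by
    rw [hΔZ, mul_conj_add_conj_mul hU hLd] at hΔ
    rw [← star_conj_conj_of_mem_unitaryGroup hU (of _), hΔ, Matrix.mul_zero, Matrix.zero_mul]
  have hZ0 : Z = 0 := by
    ext k l
    rcases eq_or_ne (d k + d l) 0 with h | h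
    · exact conj_apply_eq_zero_of_add_eq_zero hU hLd hd hker h
    · exact (mul_eq_zero.mp (congrFun (congrFun hZ k) l)).resolve_left h
  rw [hΔZ, hZ0, Matrix.mul_zero, Matrix.zero_mul]

theorem eq_of_mul_add_mul_eq (hU : U ∈ unitaryGroup n ℝ) (hLd : L = U * diagonal d * star U)
    (hd : ∀ k, 0 ≤ d k) {X Y : Matrix n n ℝ} (hX : L * X + X * L = C) (hY : L * Y + Y * L = C)
    (hXker : LinearMap.ker L.mulVecLin ≤ LinearMap.ker X.mulVecLin)
    (hYker : LinearMap.ker L.mulVecLin ≤ LinearMap.ker Y.mulVecLin) : X = Y := by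
  refine sub_eq_zero.mp (eq_zero_of_mul_add_mul_eq_zero hU hLd hd ?_ fun v hv => ?_)
  · rw [Matrix.mul_sub, Matrix.sub_mul, sub_add_sub_comm, hX, hY, sub_self]
  · have hXv : X *ᵥ v = 0 := hXker hv
    have hYv : Y *ᵥ v = 0 := hYker hv
    change (X - Y) *ᵥ v = 0
    rw [sub_mulVec, hXv, hYv, sub_zero]

end Matrix

/-- For the Laplacian `L` of a connected simple undirected graph and `W ⪰ 0`, the integral
`X0 = ∫₀^∞ e^{-τL} L W L e^{-τL} dτ` exists (entrywise), is PSD, solves the Lyapunov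
equation `-LX - XL + LWL = 0`, satisfies `span(1) ⊆ ker X0`, and is the unique PSD
solution with this kernel property. -/
theorem stmt10 {N : ℕ} (L W : Matrix (Fin N) (Fin N) ℝ)
    (hL : L.PosSemidef)
    (hker : LinearMap.ker L.mulVecLin = Submodule.span ℝ {(1 : Fin N → ℝ)})
    (hW : W.PosSemidef) :
    (∀ i j, IntegrableOn (fun τ : ℝ =>
        (NormedSpace.exp ((-τ) • L) * (L * W * L) * NormedSpace.exp ((-τ) • L)) i j)
        (Ici 0)) ∧
    ∀ X0 : Matrix (Fin N) (Fin N) ℝ,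
      X0 = Matrix.of (fun i j => ∫ τ in Ici (0:ℝ),
        (NormedSpace.exp ((-τ) • L) * (L * W * L) * NormedSpace.exp ((-τ) • L)) i j) →
      X0.PosSemidef ∧ (-(L * X0) - X0 * L + L * W * L = 0) ∧
      Submodule.span ℝ {(1 : Fin N → ℝ)} ≤ LinearMap.ker X0.mulVecLin ∧
      (∀ X : Matrix (Fin N) (Fin N) ℝ, X.PosSemidef →
        -(L * X) - X * L + L * W * L = 0 →
        Submodule.span ℝ {(1 : Fin N → ℝ)} ≤ LinearMap.ker X.mulVecLin → X = X0) := by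
  have hU := hL.isHermitian.eigenvectorUnitary.2
  have hLd := hL.isHermitian.real_spectral_theorem
  have hd := hL.eigenvalues_nonneg
  have hC : LinearMap.ker L.mulVecLin ≤ LinearMap.ker (L * W * L).mulVecLin := by
    simpa only [mulVecLin_mul] using LinearMap.ker_le_ker_comp L.mulVecLin (L * W).mulVecLin
  have hLWL : (L * W * L).PosSemidef := by
    simpa only [hL.isHermitian.eq] using hW.mul_mul_conjTranspose_same L
  have hint := integrableOn_lyapunovIntegrand hU hLd hd hC
  refine ⟨hint, fun X0 hX0 => ?_⟩
  have hsol : X0 = lyapunovSolution _ _ (L * W * L) :=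
    hX0.trans (ext fun i j => integral_lyapunovIntegrand hU hLd hd hC i j)
  have hsyl : L * X0 + X0 * L = L * W * L :=
    hsol ▸ mul_lyapunovSolution_add_lyapunovSolution_mul hU hLd hd hC
  have hkerX0 : LinearMap.ker L.mulVecLin ≤ LinearMap.ker X0.mulVecLin :=
    hsol ▸ ker_le_ker_lyapunovSolution hU hLd hC
  refine ⟨hX0 ▸ posSemidef_of_integral_apply hint
      (ae_of_all _ (lyapunovIntegrand_posSemidef hL.isHermitian hLWL)),
    neg_sub_add_eq_zero_iff.mpr hsyl, hker ▸ hkerX0, fun X _ hX hkerX => ?_⟩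
  exact eq_of_mul_add_mul_eq hU hLd hd (neg_sub_add_eq_zero_iff.mp hX) hsyl (hker ▸ hkerX) hkerX0
end

section
/- Let R be a positive definite N×N matrix and L the Laplacian of a connected simple undirected graph. Let Y0 be the positive semi-definite solution of -LY - YL + LRL = 0 with span(1_N) ⊆ ker(Y0). Then ker(Y0) = span(1_N) exactly. -/
/-! If `Y0 x = 0`, the Lyapunov equation `LY0 + Y0L = LRL` gives `xᴴLRLx = xᴴ(LY0 + Y0L)x = 0`,
since both terms vanish by symmetry of `L` and `Y0`. But `xᴴLRLx = (Lx)ᴴR(Lx)`, so `R ≻ 0` forces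
`Lx = 0`, i.e. `ker Y0 ⊆ ker L = span 1`. -/

open scoped ComplexOrder

namespace Matrix

variable {n 𝕜 : Type*} [Fintype n] [RCLike 𝕜]

theorem dotProduct_mul_mulVec_eq_zero_of_mulVec_eq_zero {Y : Matrix n n 𝕜} (hY : Y.IsHermitian)
    {x : n → 𝕜} (hx : Y *ᵥ x = 0) (M : Matrix n n 𝕜) : star x ⬝ᵥ (Y * M) *ᵥ x = 0 := by
  rw [← mulVec_mulVec, dotProduct_mulVec, ← hY.eq, vecMul_conjTranspose, star_star, hx,
    star_zero, zero_dotProduct]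

theorem ker_mulVecLin_le_of_mul_add_mul_eq_mul_mul {L R Y : Matrix n n 𝕜} (hL : L.IsHermitian)
    (hY : Y.IsHermitian) (hR : R.PosDef) (h : L * Y + Y * L = L * R * L) :
    LinearMap.ker Y.mulVecLin ≤ LinearMap.ker L.mulVecLin := by
  intro x hx
  rw [LinearMap.mem_ker, mulVecLin_apply] at hx ⊢
  by_contra hLx
  have hquad : star x ⬝ᵥ (L * R * L) *ᵥ x = star (L *ᵥ x) ⬝ᵥ R *ᵥ (L *ᵥ x) := by
    rw [star_mulVec, hL.eq, mul_assoc, ← mulVec_mulVec, ← mulVec_mulVec, dotProduct_mulVec]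
  have hzero : star x ⬝ᵥ (L * R * L) *ᵥ x = 0 := by
    rw [← h, add_mulVec, dotProduct_add, ← mulVec_mulVec, hx, mulVec_zero, dotProduct_zero,
      dotProduct_mul_mulVec_eq_zero_of_mulVec_eq_zero hY hx, add_zero]
  exact (hR.dotProduct_mulVec_pos hLx).ne' (hquad ▸ hzero)

end Matrix

/-- For `R ≻ 0` and the Laplacian `L` of a connected simple undirected graph, if `Y0 ⪰ 0`
solves `-LY - YL + LRL = 0` with `span(1) ⊆ ker Y0`, then `ker Y0 = span(1)` exactly. -/
theorem stmt11 {N : ℕ} (L R Y0 : Matrix (Fin N) (Fin N) ℝ)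
    (hL : L.PosSemidef)
    (hker : LinearMap.ker L.mulVecLin = Submodule.span ℝ {(1 : Fin N → ℝ)})
    (hR : R.PosDef)
    (hY0 : Y0.PosSemidef)
    (hLyap : -(L * Y0) - Y0 * L + L * R * L = 0)
    (hkerY : Submodule.span ℝ {(1 : Fin N → ℝ)} ≤ LinearMap.ker Y0.mulVecLin) :
    LinearMap.ker Y0.mulVecLin = Submodule.span ℝ {(1 : Fin N → ℝ)} := by
  have hsum : L * Y0 + Y0 * L = L * R * L := by
    rw [← sub_eq_zero, ← neg_eq_zero, ← hLyap]
    abel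
  refine le_antisymm ?_ hkerY
  rw [← hker]
  exact Matrix.ker_mulVecLin_le_of_mul_add_mul_eq_mul_mul hL.1 hY0.1 hR hsum
end

section
/- Consider the discrete-time system x(k+1) = A x(k), y(k) = C x(k) with A ∈ ℝ^{n×n}, C ∈ ℝ^{p×n}. Then y(k) → 0 as k → ∞ for every initial state x(0) if and only if X₊(A) ⊆ ker(C), where X₊(A) is the sum of the generalized eigenspaces of A associated with eigenvalues λ with |λ| ≥ 1. -/
open Matrix Filter Topology

/-!
Over `ℂ` the state space is the direct sum of the generalized eigenspaces of `A`, each invariant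
under `A`. On the one for `μ` with `‖μ‖ < 1`, `A ^ k z` is a binomial sum of the vectors
`N ^ i z` (`N = A - μ`, `i` below the nilpotency order) with coefficients `(k choose i) μ ^ (k - i)`,
all of which tend to `0`. On the one for `‖μ‖ ≥ 1`, induction on the nilpotency order shows that
`C` vanishes: once `C` kills every `A ^ k (N z)`, one gets `C (A ^ k z) = μ ^ k C z`, whose norm
cannot tend to `0` unless `C z = 0`. Real initial states suffice, since a complex trajectory is a
combination of the trajectories of its real and imaginary parts.
-/

lemma tendsto_choose_mul_pow_sub_nhds_zero {R : Type*} [NormedRing R] [HasSummableGeomSeries R]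
    (i : ℕ) {r : R} (hr : ‖r‖ < 1) :
    Tendsto (fun k : ℕ => (k.choose i : R) * r ^ (k - i)) atTop (𝓝 0) := by
  rw [← tendsto_add_atTop_iff_nat i]
  simpa using (summable_choose_mul_geometric_of_norm_lt_one i hr).tendsto_atTop_zero

namespace Module.End

section Algebraic

variable {R V W : Type*} [CommRing R] [AddCommGroup V] [Module R V] [AddCommGroup W] [Module R W]
  {f : End R V} {μ : R}

lemma pow_apply_eq_sum_of_pow_sub_smul_apply_eq_zero {m : ℕ} {z : V}
    (hz : ((f - μ • 1) ^ m) z = 0) {k : ℕ} (hk : m ≤ k) :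
    (f ^ k) z = ∑ i ∈ Finset.range m, ((k.choose i : R) * μ ^ (k - i)) • ((f - μ • 1) ^ i) z := by
  have hcomm : Commute (f - μ • 1) (μ • 1) := (Commute.one_right _).smul_right μ
  rw [← sub_add_cancel f (μ • 1), hcomm.add_pow, LinearMap.coe_sum, Finset.sum_apply,
    sub_add_cancel]
  refine (Finset.sum_subset (by simpa using hk.trans k.le_succ) fun i _ hi => ?_).symm.trans
    (Finset.sum_congr rfl fun i _ => ?_)
  · simp only [Finset.mem_range, not_lt] at hi
    simp [smul_pow, pow_map_zero_of_le hi hz]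
  · simp [smul_pow, mul_smul, Nat.cast_smul_eq_nsmul, smul_comm (μ ^ (k - i))]

lemma map_pow_apply_eq_pow_smul {g : V →ₗ[R] W} {z : V}
    (h : ∀ k, g ((f - μ • 1) ((f ^ k) z)) = 0) (k : ℕ) : g ((f ^ k) z) = μ ^ k • g z := by
  induction k with
  | zero => simp
  | succ k ih =>
    have hf : ∀ w, f w = μ • w + (f - μ • 1) w := fun w => by simp
    rw [pow_succ', mul_apply, hf, map_add, h k, add_zero, map_smul, ih, pow_succ', mul_smul]

lemma sub_smul_apply_mem_genEigenspace {m : ℕ} {z : V} (hz : z ∈ f.genEigenspace μ ↑(m + 1)) :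
    (f - μ • 1) z ∈ f.genEigenspace μ m := by
  rw [mem_genEigenspace_nat, LinearMap.mem_ker] at hz ⊢
  rwa [← mul_apply, ← pow_succ]

end Algebraic

section Normed

variable {𝕜 V W : Type*} [NormedField 𝕜] [NormedAddCommGroup V] [NormedSpace 𝕜 V]
  [NormedAddCommGroup W] [NormedSpace 𝕜 W] {f : End 𝕜 V} {μ : 𝕜}

lemma tendsto_pow_apply_of_mem_maxGenEigenspace [HasSummableGeomSeries 𝕜] (hμ : ‖μ‖ < 1) {z : V}
    (hz : z ∈ f.maxGenEigenspace μ) : Tendsto (fun k => (f ^ k) z) atTop (𝓝 0) := by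
  obtain ⟨m, hm⟩ := (f.mem_maxGenEigenspace μ z).1 hz
  have hsum : Tendsto (fun k : ℕ => ∑ i ∈ Finset.range m,
      ((k.choose i : 𝕜) * μ ^ (k - i)) • ((f - μ • 1) ^ i) z) atTop (𝓝 0) := by
    simpa using tendsto_finsetSum (Finset.range m) fun i _ =>
      (tendsto_choose_mul_pow_sub_nhds_zero i hμ).smul_const (((f - μ • 1) ^ i) z)
  refine hsum.congr' ?_
  filter_upwards [eventually_ge_atTop m] with k hk
  exact (pow_apply_eq_sum_of_pow_sub_smul_apply_eq_zero hm hk).symm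

lemma maxGenEigenspace_le_ker_of_tendsto (hμ : 1 ≤ ‖μ‖) {g : V →ₗ[𝕜] W}
    (hg : ∀ z, Tendsto (fun k => g ((f ^ k) z)) atTop (𝓝 0)) :
    f.maxGenEigenspace μ ≤ LinearMap.ker g := by
  suffices h : ∀ m : ℕ, f.genEigenspace μ m ≤ LinearMap.ker g by
    intro z hz
    obtain ⟨m, hm⟩ := (f.mem_maxGenEigenspace μ z).1 hz
    exact h m (mem_genEigenspace_nat.2 hm)
  intro m
  induction m with
  | zero => simp
  | succ m ih =>
    intro z hz
    have hpow : ∀ k, g ((f ^ k) z) = μ ^ k • g z := map_pow_apply_eq_pow_smul fun k =>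
      ih (sub_smul_apply_mem_genEigenspace
        (mapsTo_genEigenspace_of_comm ((Commute.refl f).pow_right k) μ _ hz))
    have hle : ∀ k, ‖g z‖ ≤ ‖g ((f ^ k) z)‖ := fun k => by
      rw [hpow, norm_smul, norm_pow]
      exact le_mul_of_one_le_left (norm_nonneg _) (one_le_pow₀ hμ)
    have hlim : Tendsto (fun k => ‖g ((f ^ k) z)‖) atTop (𝓝 0) := by
      simpa using (hg z).norm
    exact norm_le_zero_iff.1 (ge_of_tendsto' hlim hle)

end Normed

variable {𝕜 V W : Type*} [NontriviallyNormedField 𝕜] [CompleteSpace 𝕜] [IsAlgClosed 𝕜]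
  [NormedAddCommGroup V] [NormedSpace 𝕜 V] [FiniteDimensional 𝕜 V]
  [NormedAddCommGroup W] [NormedSpace 𝕜 W]

theorem tendsto_map_pow_apply_nhds_zero_iff (f : End 𝕜 V) (g : V →ₗ[𝕜] W) :
    (∀ z, Tendsto (fun k => g ((f ^ k) z)) atTop (𝓝 0)) ↔
      ⨆ μ ∈ {μ : 𝕜 | 1 ≤ ‖μ‖}, f.maxGenEigenspace μ ≤ LinearMap.ker g := by
  refine ⟨fun hg => iSup₂_le fun μ hμ => maxGenEigenspace_le_ker_of_tendsto hμ hg, fun h z => ?_⟩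
  have hz : z ∈ ⨆ μ, f.maxGenEigenspace μ := by simp [iSup_maxGenEigenspace_eq_top]
  induction hz using Submodule.iSup_induction' with
  | mem μ w hw =>
    rcases le_or_gt 1 ‖μ‖ with hμ | hμ
    · have hker : ∀ k, g ((f ^ k) w) = 0 := fun k =>
        h (Submodule.mem_iSup_of_mem μ (Submodule.mem_iSup_of_mem hμ
          (mapsTo_maxGenEigenspace_of_comm ((Commute.refl f).pow_right k) μ hw)))
      simp [hker]
    · simpa [Function.comp_def] using (g.continuous_of_finiteDimensional.tendsto 0).comp
        (tendsto_pow_apply_of_mem_maxGenEigenspace hμ hw)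
  | zero => simp
  | add x y _ _ hx hy => simpa using hx.add hy

end Module.End

lemma tendsto_ofReal_comp_nhds_zero_iff {α ι : Type*} {l : Filter α} {u : α → ι → ℝ} :
    Tendsto (fun a i => (u a i : ℂ)) l (𝓝 0) ↔ Tendsto u l (𝓝 0) := by
  simp only [tendsto_pi_nhds, Pi.zero_apply]
  exact forall_congr' fun i => by simpa using tendsto_ofReal_iff (f := fun a => u a i) (x := 0)

namespace Matrix

variable {m n : Type*} [Fintype n] [DecidableEq n]

lemma mulVecLin_pow {R : Type*} [CommSemiring R] (M : Matrix n n R) (k : ℕ) :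
    M.mulVecLin ^ k = (M ^ k).mulVecLin :=
  (toLin'_pow M k).symm

lemma map_ofReal_mulVec_pow_mulVec (A : Matrix n n ℝ) (C : Matrix m n ℝ) (x : n → ℝ) (k : ℕ) :
    C.map Complex.ofReal *ᵥ ((A.map Complex.ofReal) ^ k *ᵥ fun i => (x i : ℂ)) =
      fun i => ((C *ᵥ (A ^ k *ᵥ x)) i : ℂ) := by
  funext i
  have hpow : (A.map Complex.ofReal) ^ k = (A ^ k).map Complex.ofRealHom :=
    (Matrix.map_pow A Complex.ofRealHom k).symm
  have hx : (fun i => (x i : ℂ)) = Complex.ofRealHom ∘ x := rfl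
  have hAx : (A ^ k).map Complex.ofRealHom *ᵥ (Complex.ofRealHom ∘ x) =
      Complex.ofRealHom ∘ (A ^ k *ᵥ x) := funext fun j => (RingHom.map_mulVec _ _ _ j).symm
  rw [hpow, hx, hAx]
  exact (RingHom.map_mulVec Complex.ofRealHom C _ i).symm

lemma tendsto_mulVec_pow_mulVec_iff_complex (A : Matrix n n ℝ) (C : Matrix m n ℝ) :
    (∀ x : n → ℝ, Tendsto (fun k => C *ᵥ (A ^ k *ᵥ x)) atTop (𝓝 0)) ↔
      ∀ z : n → ℂ, Tendsto (fun k => C.map Complex.ofReal *ᵥ ((A.map Complex.ofReal) ^ k *ᵥ z))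
        atTop (𝓝 0) := by
  have hreal : ∀ x : n → ℝ, Tendsto (fun k => C *ᵥ (A ^ k *ᵥ x)) atTop (𝓝 0) ↔
      Tendsto (fun k => C.map Complex.ofReal *ᵥ ((A.map Complex.ofReal) ^ k *ᵥ
        fun i => (x i : ℂ))) atTop (𝓝 0) := fun x => by
    simp only [map_ofReal_mulVec_pow_mulVec, tendsto_ofReal_comp_nhds_zero_iff]
  refine ⟨fun h z => ?_, fun h x => (hreal x).2 (h _)⟩
  have hz : z = (fun i => ((z i).re : ℂ)) + Complex.I • fun i => ((z i).im : ℂ) := by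
    funext i
    simpa [mul_comm] using (Complex.re_add_im (z i)).symm
  rw [hz]
  simpa [mulVec_add, mulVec_smul] using
    ((hreal _).1 (h fun i => (z i).re)).add
      (((hreal _).1 (h fun i => (z i).im)).const_smul Complex.I)

end Matrix

/-- For the discrete-time system `x(k+1) = A x(k)`, `y(k) = C x(k)`: `y(k) → 0` for every
initial state iff the unstable subspace `X₊(A)` (the sum of generalized eigenspaces of `A`
for eigenvalues `λ` with `|λ| ≥ 1`, taken over `ℂ`) is contained in `ker C`. -/
theorem stmt13 {n p : ℕ} (A : Matrix (Fin n) (Fin n) ℝ) (C : Matrix (Fin p) (Fin n) ℝ) :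
    (∀ x0 : Fin n → ℝ,
        Tendsto (fun k : ℕ => C *ᵥ ((A ^ k) *ᵥ x0)) atTop (𝓝 0)) ↔
      (∀ z : Fin n → ℂ,
        z ∈ (⨆ μ ∈ {μ : ℂ | 1 ≤ ‖μ‖},
          Module.End.maxGenEigenspace (Matrix.mulVecLin (A.map Complex.ofReal)) μ) →
        (C.map Complex.ofReal) *ᵥ z = 0) := by
  have key := Module.End.tendsto_map_pow_apply_nhds_zero_iff (A.map Complex.ofReal).mulVecLin
    (C.map Complex.ofReal).mulVecLin
  simp only [Matrix.mulVecLin_pow, Matrix.mulVecLin_apply] at key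
  rw [Matrix.tendsto_mulVec_pow_mulVec_iff_complex, key]
  simp only [SetLike.le_def, LinearMap.mem_ker, Matrix.mulVecLin_apply]
end
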